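/- arXiv:2412.04640 — 4 statements merged into one kernel-verified Lean document; each statement's English description precedes it below -/
import Mathlib

section
/- Let a₁ > a₂ > 0 and 0 < b < 1 with a₁b ≠ a₂, and define h(x) = exp(-x·a₂) - b·exp(-x·a₁) - 1 + b. Then the equation h(x) = 0 has exactly two solutions in ℝ: x = 0 and one other solution ξ ≠ 0. -/
open Real

theorem gev_h_two_roots
    (a₁ a₂ b : ℝ) (ha : a₂ < a₁) (ha₂ : 0 < a₂) (hb0 : 0 < b) (hb1 : b < 1)
    (hne : a₁ * b ≠ a₂)
    (h : ℝ → ℝ) (hdef : h = fun x => Real.exp (-x * a₂) - b * Real.exp (-x * a₁) - 1 + b) :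
    h 0 = 0 ∧ ∃! ξ : ℝ, ξ ≠ 0 ∧ h ξ = 0 := by
  subst hdef
  set f : ℝ → ℝ := fun x => Real.exp (-x * a₂) - b * Real.exp (-x * a₁) - 1 + b with hf
  have ha12 : 0 < a₁ - a₂ := by linarith
  have ha₁ : 0 < a₁ := lt_trans ha₂ ha
  have hab : 0 < a₁ * b := mul_pos ha₁ hb0
  set s : ℝ := (Real.log (a₁ * b) - Real.log a₂) / (a₁ - a₂) with hs
  have hf0 : f 0 = 0 := by simp [hf]
  refine ⟨hf0, ?_⟩
  -- derivative
  have hd : ∀ x : ℝ, HasDerivAt f (a₁ * b * Real.exp (-x * a₁) - a₂ * Real.exp (-x * a₂)) x := by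
    intro x
    have h1 : HasDerivAt (fun y : ℝ => -y * a₂) (-a₂) x := by
      simpa using (hasDerivAt_id x).neg.mul_const a₂
    have h3 : HasDerivAt (fun y : ℝ => -y * a₁) (-a₁) x := by
      simpa using (hasDerivAt_id x).neg.mul_const a₁
    have h2 := h1.exp
    have h4 := h3.exp
    have h5 := ((h2.sub (h4.const_mul b)).sub_const 1).add_const b
    exact h5.congr_deriv (by ring)
  have key : ∀ x : ℝ, x < s → a₂ * Real.exp (-x * a₂) < a₁ * b * Real.exp (-x * a₁) := by
    intro x hx
    have e1 : a₂ * Real.exp (-x * a₂) = Real.exp (Real.log a₂ + -x * a₂) := by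
      rw [Real.exp_add, Real.exp_log ha₂]
    have e2 : a₁ * b * Real.exp (-x * a₁) = Real.exp (Real.log (a₁ * b) + -x * a₁) := by
      rw [Real.exp_add, Real.exp_log hab]
    rw [e1, e2, Real.exp_lt_exp]
    have := (lt_div_iff₀ ha12).mp hx
    nlinarith
  have key' : ∀ x : ℝ, s < x → a₁ * b * Real.exp (-x * a₁) < a₂ * Real.exp (-x * a₂) := by
    intro x hx
    have e1 : a₂ * Real.exp (-x * a₂) = Real.exp (Real.log a₂ + -x * a₂) := by
      rw [Real.exp_add, Real.exp_log ha₂]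
    have e2 : a₁ * b * Real.exp (-x * a₁) = Real.exp (Real.log (a₁ * b) + -x * a₁) := by
      rw [Real.exp_add, Real.exp_log hab]
    rw [e1, e2, Real.exp_lt_exp]
    have := (div_lt_iff₀ ha12).mp hx
    nlinarith
  have hcont : Continuous f := by
    apply Continuous.add
    apply Continuous.sub
    apply Continuous.sub
    · exact (continuous_neg.mul continuous_const).rexp
    · exact continuous_const.mul (continuous_neg.mul continuous_const).rexp
    all_goals exact continuous_const
  have hmono : StrictMonoOn f (Set.Iic s) := by
    apply strictMonoOn_of_deriv_pos (convex_Iic s) hcont.continuousOn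
    intro x hx
    rw [interior_Iic, Set.mem_Iio] at hx
    rw [(hd x).deriv]
    have := key x hx
    linarith
  have hanti : StrictAntiOn f (Set.Ici s) := by
    apply strictAntiOn_of_deriv_neg (convex_Ici s) hcont.continuousOn
    intro x hx
    rw [interior_Ici, Set.mem_Ioi] at hx
    rw [(hd x).deriv]
    have := key' x hx
    linarith
  have hsne : s ≠ 0 := by
    intro h0
    rw [hs, div_eq_zero_iff] at h0
    rcases h0 with h0 | h0
    · have : Real.log (a₁ * b) = Real.log a₂ := by linarith
      have := congrArg Real.exp this
      rw [Real.exp_log hab, Real.exp_log ha₂] at this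
      exact hne this
    · linarith
  rcases lt_or_gt_of_ne hsne with hsneg | hspos
  · -- s < 0 : root is to the left of s
    have hfs : 0 < f s := by
      have := hanti (Set.mem_Ici.mpr le_rfl) (Set.mem_Ici.mpr hsneg.le) hsneg
      rwa [hf0] at this
    set T : ℝ := min (s - 1) (-(Real.log (2 / b)) / (a₁ - a₂)) with hT
    have hTs : T < s := lt_of_le_of_lt (min_le_left _ _) (by linarith)
    have hKey : 2 ≤ b * Real.exp (-T * (a₁ - a₂)) := by
      have h1 : T ≤ -(Real.log (2 / b)) / (a₁ - a₂) := min_le_right _ _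
      have h2 : Real.log (2 / b) ≤ -T * (a₁ - a₂) := by
        rw [le_div_iff₀ ha12] at h1; nlinarith
      have h3 : 2 / b ≤ Real.exp (-T * (a₁ - a₂)) := by
        rw [← Real.exp_log (by positivity : (0:ℝ) < 2 / b)]
        exact Real.exp_le_exp.mpr h2
      calc 2 = b * (2 / b) := by field_simp
        _ ≤ _ := by nlinarith [Real.exp_pos (-T * (a₁ - a₂))]
    have hfT : f T < 0 := by
      have hsplit : Real.exp (-T * a₁) = Real.exp (-T * a₂) * Real.exp (-T * (a₁ - a₂)) := by
        rw [← Real.exp_add]; ring_nf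
      have hE := Real.exp_pos (-T * a₂)
      simp only [hf]
      rw [hsplit]
      nlinarith
    obtain ⟨ξ, hξmem, hξ0⟩ := intermediate_value_Ioo hTs.le hcont.continuousOn
      (Set.mem_Ioo.mpr ⟨hfT, hfs⟩)
    have hξs : ξ < s := hξmem.2
    have hξne : ξ ≠ 0 := by intro hz; rw [hz] at hξs; linarith
    refine ⟨ξ, ⟨hξne, hξ0⟩, ?_⟩
    rintro η ⟨hηne, hη0⟩
    by_cases hηs : s ≤ η
    · exfalso
      have h0m : (0:ℝ) ∈ Set.Ici s := Set.mem_Ici.mpr hsneg.le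
      have := hanti.injOn (Set.mem_Ici.mpr hηs) h0m (by rw [hη0, hf0])
      exact hηne this
    · push_neg at hηs
      exact hmono.injOn (Set.mem_Iic.mpr hηs.le) (Set.mem_Iic.mpr hξs.le) (by rw [hη0, hξ0])
  · -- 0 < s : root is to the right of s
    have hfs : 0 < f s := by
      have := hmono (Set.mem_Iic.mpr hspos.le) (Set.mem_Iic.mpr le_rfl) hspos
      rwa [hf0] at this
    set T : ℝ := max (s + 1) (Real.log (2 / (1 - b)) / a₂) with hT
    have hTs : s < T := lt_of_lt_of_le (by linarith) (le_max_left _ _)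
    have hKey : Real.exp (-T * a₂) ≤ (1 - b) / 2 := by
      have h1 : Real.log (2 / (1 - b)) / a₂ ≤ T := le_max_right _ _
      have h2 : Real.log (2 / (1 - b)) ≤ T * a₂ := by
        rw [div_le_iff₀ ha₂] at h1; linarith
      have h3 : 2 / (1 - b) ≤ Real.exp (T * a₂) := by
        rw [← Real.exp_log (div_pos two_pos (by linarith) : (0:ℝ) < 2 / (1 - b))]
        exact Real.exp_le_exp.mpr h2
      have h4 : Real.exp (-T * a₂) = (Real.exp (T * a₂))⁻¹ := by
        rw [← Real.exp_neg]; ring_nf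
      rw [h4]
      rw [inv_le_comm₀ (Real.exp_pos _) (div_pos (by linarith) two_pos)]
      calc ((1 - b) / 2)⁻¹ = 2 / (1 - b) := by field_simp
        _ ≤ _ := h3
    have hfT : f T < 0 := by
      have hE := Real.exp_pos (-T * a₁)
      simp only [hf]
      nlinarith
    obtain ⟨ξ, hξmem, hξ0⟩ := intermediate_value_Ioo' hTs.le hcont.continuousOn
      (Set.mem_Ioo.mpr ⟨hfT, hfs⟩)
    have hξs : s < ξ := hξmem.1
    have hξne : ξ ≠ 0 := by intro hz; rw [hz] at hξs; linarith
    refine ⟨ξ, ⟨hξne, hξ0⟩, ?_⟩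
    rintro η ⟨hηne, hη0⟩
    by_cases hηs : η ≤ s
    · exfalso
      have h0m : (0:ℝ) ∈ Set.Iic s := Set.mem_Iic.mpr hspos.le
      have := hmono.injOn (Set.mem_Iic.mpr hηs) h0m (by rw [hη0, hf0])
      exact hηne this
    · push_neg at hηs
      exact hanti.injOn (Set.mem_Ici.mpr hηs.le) (Set.mem_Ici.mpr hξs.le) (by rw [hη0, hξ0])
end

section
/- With a₁ > a₂ > 0, 0 < b < 1, h(x) = exp(-x·a₂) - b·exp(-x·a₁) - 1 + b and s = log(a₁b/a₂)/(a₁-a₂): if a₁b > a₂ then the nonzero root ξ of h satisfies ξ > s > 0, and if a₁b < a₂ then ξ < s < 0. -/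
open Real

theorem gev_h_root_position
    (a₁ a₂ b : ℝ) (ha : a₂ < a₁) (ha₂ : 0 < a₂) (hb0 : 0 < b) (hb1 : b < 1)
    (h : ℝ → ℝ) (hdef : h = fun x => Real.exp (-x * a₂) - b * Real.exp (-x * a₁) - 1 + b)
    (s : ℝ) (hs : s = Real.log (a₁ * b / a₂) / (a₁ - a₂))
    (ξ : ℝ) (hξ0 : ξ ≠ 0) (hroot : h ξ = 0) :
    (a₂ < a₁ * b → s < ξ ∧ 0 < s) ∧ (a₁ * b < a₂ → ξ < s ∧ s < 0) := by
  have ha₁ : 0 < a₁ := ha₂.trans ha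
  have hd : 0 < a₁ - a₂ := sub_pos.mpr ha
  have hr : 0 < a₁ * b / a₂ := by positivity
  have h0 : h 0 = 0 := by simp [hdef]
  -- derivative
  have hderiv : ∀ x : ℝ, HasDerivAt h
      (a₁ * b * Real.exp (-x * a₁) - a₂ * Real.exp (-x * a₂)) x := by
    intro x
    have l2 : HasDerivAt (fun x : ℝ => -x * a₂) (-a₂) x := by
      simpa using ((hasDerivAt_id x).neg.mul_const a₂)
    have l1 : HasDerivAt (fun x : ℝ => -x * a₁) (-a₁) x := by
      simpa using ((hasDerivAt_id x).neg.mul_const a₁)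
    have e2 : HasDerivAt (fun x : ℝ => Real.exp (-x * a₂))
        (Real.exp (-x * a₂) * (-a₂)) x := l2.exp
    have e1 : HasDerivAt (fun x : ℝ => Real.exp (-x * a₁))
        (Real.exp (-x * a₁) * (-a₁)) x := l1.exp
    have := ((e2.sub (e1.const_mul b)).sub_const 1).add_const b
    rw [hdef]
    refine this.congr_deriv ?_
    ring
  -- sign of the derivative
  have hsign : ∀ x : ℝ, x < s →
      0 < a₁ * b * Real.exp (-x * a₁) - a₂ * Real.exp (-x * a₂) := by
    intro x hx
    have key : a₂ * Real.exp (-x * a₂) < a₁ * b * Real.exp (-x * a₁) := by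
      have hxe : Real.exp (x * (a₁ - a₂)) < a₁ * b / a₂ := by
        rw [← Real.exp_log hr]
        apply Real.exp_lt_exp.mpr
        rw [hs] at hx
        calc x * (a₁ - a₂) < Real.log (a₁ * b / a₂) / (a₁ - a₂) * (a₁ - a₂) := by
              exact mul_lt_mul_of_pos_right hx hd
          _ = Real.log (a₁ * b / a₂) := by field_simp
      have h2 : a₂ * Real.exp (x * (a₁ - a₂)) < a₁ * b := by
        have := (lt_div_iff₀ ha₂).mp hxe
        linarith
      have hsplit : Real.exp (-x * a₂) = Real.exp (x * (a₁ - a₂)) * Real.exp (-x * a₁) := by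
        rw [← Real.exp_add]; ring_nf
      rw [hsplit, ← mul_assoc]
      exact mul_lt_mul_of_pos_right h2 (Real.exp_pos _)
    linarith
  have hsign' : ∀ x : ℝ, s < x →
      a₁ * b * Real.exp (-x * a₁) - a₂ * Real.exp (-x * a₂) < 0 := by
    intro x hx
    have key : a₁ * b * Real.exp (-x * a₁) < a₂ * Real.exp (-x * a₂) := by
      have hxe : a₁ * b / a₂ < Real.exp (x * (a₁ - a₂)) := by
        rw [← Real.exp_log hr]
        apply Real.exp_lt_exp.mpr
        rw [hs] at hx
        calc Real.log (a₁ * b / a₂) = Real.log (a₁ * b / a₂) / (a₁ - a₂) * (a₁ - a₂) := by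
              field_simp
          _ < x * (a₁ - a₂) := mul_lt_mul_of_pos_right hx hd
      have h2 : a₁ * b < a₂ * Real.exp (x * (a₁ - a₂)) := by
        have := (div_lt_iff₀ ha₂).mp hxe
        linarith
      have hsplit : Real.exp (-x * a₂) = Real.exp (x * (a₁ - a₂)) * Real.exp (-x * a₁) := by
        rw [← Real.exp_add]; ring_nf
      rw [hsplit, ← mul_assoc]
      exact mul_lt_mul_of_pos_right h2 (Real.exp_pos _)
    linarith
  have hcont : Continuous h := by
    rw [hdef]; continuity
  -- monotonicity
  have hmono : StrictMonoOn h (Set.Iic s) := by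
    apply strictMonoOn_of_deriv_pos (convex_Iic s) hcont.continuousOn
    intro x hx
    rw [interior_Iic] at hx
    rw [(hderiv x).deriv]
    exact hsign x hx
  have hanti : StrictAntiOn h (Set.Ici s) := by
    apply strictAntiOn_of_deriv_neg (convex_Ici s) hcont.continuousOn
    intro x hx
    rw [interior_Ici] at hx
    rw [(hderiv x).deriv]
    exact hsign' x hx
  constructor
  · intro hcase
    have hs0 : 0 < s := by
      rw [hs]
      apply div_pos _ hd
      apply Real.log_pos
      rw [lt_div_iff₀ ha₂]
      linarith
    have hξs : s < ξ := by
      by_contra hle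
      push_neg at hle
      have := hmono.injOn (Set.mem_Iic.mpr hle) (Set.mem_Iic.mpr hs0.le)
        (by rw [hroot, h0])
      exact hξ0 this
    exact ⟨hξs, hs0⟩
  · intro hcase
    have hs0 : s < 0 := by
      rw [hs]
      apply div_neg_of_neg_of_pos _ hd
      apply Real.log_neg hr
      rw [div_lt_one ha₂]
      linarith
    have hξs : ξ < s := by
      by_contra hle
      push_neg at hle
      have := hanti.injOn (Set.mem_Ici.mpr hle) (Set.mem_Ici.mpr hs0.le)
        (by rw [hroot, h0])
      exact hξ0 this
    exact ⟨hξs, hs0⟩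
end

section
/- Let a₁ > a₂ > 0, 0 < b < 1, h(x) = exp(-x·a₂) - b·exp(-x·a₁) - 1 + b, and let ξ be the unique nonzero root of h (assuming a₁b ≠ a₂). Then h'(ξ) ≠ 0. -/
open Real

theorem gev_h_deriv_at_root_ne_zero
    (a₁ a₂ b : ℝ) (ha : a₂ < a₁) (ha₂ : 0 < a₂) (hb0 : 0 < b) (hb1 : b < 1)
    (hne : a₁ * b ≠ a₂)
    (h : ℝ → ℝ) (hdef : h = fun x => Real.exp (-x * a₂) - b * Real.exp (-x * a₁) - 1 + b)
    (ξ : ℝ) (hξ0 : ξ ≠ 0) (hroot : h ξ = 0) :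
    deriv h ξ ≠ 0 := by
  have hd : ∀ x : ℝ, HasDerivAt h (-a₂ * Real.exp (-x*a₂) + a₁*b*Real.exp (-x*a₁)) x := by
    intro x
    rw [hdef]
    have l2 : HasDerivAt (fun x : ℝ => -x*a₂) (-a₂) x := by
      simpa using ((hasDerivAt_id x).neg.mul_const a₂)
    have l1 : HasDerivAt (fun x : ℝ => -x*a₁) (-a₁) x := by
      simpa using ((hasDerivAt_id x).neg.mul_const a₁)
    have h2 : HasDerivAt (fun x : ℝ => Real.exp (-x*a₂)) (Real.exp (-x*a₂) * (-a₂)) x :=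
      (Real.hasDerivAt_exp _).comp x l2
    have h1 : HasDerivAt (fun x : ℝ => Real.exp (-x*a₁)) (Real.exp (-x*a₁) * (-a₁)) x :=
      (Real.hasDerivAt_exp _).comp x l1
    have := ((h2.sub (h1.const_mul b)).sub_const 1).add_const b
    exact this.congr_deriv (by ring)
  -- key: a zero of deriv h determines exp (x*(a₁-a₂))
  have key : ∀ x : ℝ, deriv h x = 0 → a₂ * Real.exp (x*(a₁-a₂)) = a₁ * b := by
    intro x hx
    rw [(hd x).deriv] at hx
    have hex : a₁ * b * Real.exp (-x*a₁) = a₂ * Real.exp (-x*a₂) := by linarith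
    have hE : Real.exp (-x*a₂) = Real.exp (x*(a₁-a₂)) * Real.exp (-x*a₁) := by
      rw [← Real.exp_add]; ring_nf
    rw [hE, ← mul_assoc] at hex
    exact (mul_right_cancel₀ (Real.exp_ne_zero _) hex).symm
  have huniq : ∀ x y : ℝ, deriv h x = 0 → deriv h y = 0 → x = y := by
    intro x y hx hy
    have hxy : Real.exp (x*(a₁-a₂)) = Real.exp (y*(a₁-a₂)) :=
      mul_left_cancel₀ ha₂.ne' ((key x hx).trans (key y hy).symm)
    have := Real.exp_injective hxy
    have hne' : a₁ - a₂ ≠ 0 := by linarith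
    exact mul_right_cancel₀ hne' this
  intro hderξ
  have h0 : h 0 = 0 := by simp [hdef]
  have hcont : Continuous h :=
    continuous_iff_continuousAt.mpr fun x => (hd x).differentiableAt.continuousAt
  have : ∃ c, c ≠ ξ ∧ deriv h c = 0 := by
    rcases lt_or_gt_of_ne hξ0 with hlt | hgt
    · obtain ⟨c, hc, hc0⟩ := exists_deriv_eq_zero (f := h) (a := ξ) (b := 0) hlt
        hcont.continuousOn (hroot.trans h0.symm)
      exact ⟨c, ne_of_gt hc.1, hc0⟩
    · obtain ⟨c, hc, hc0⟩ := exists_deriv_eq_zero (f := h) (a := 0) (b := ξ) hgt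
        hcont.continuousOn (h0.trans hroot.symm)
      exact ⟨c, ne_of_lt hc.2, hc0⟩
  obtain ⟨c, hcne, hc0⟩ := this
  exact hcne (huniq c ξ hc0 hderξ)
end

section
/- Fix ξ ≠ 0, σ > 0, μ ∈ ℝ and percentiles 0 < q₁ < q₂ < q₃ < 1. The map sending (ξ, μ, σ) to the quantile triple (T₁, T₂, T₃) of G_{ξ,μ,σ} is injective: if two parameter triples (with nonzero shape parameters) give the same three quantiles at q₁, q₂, q₃, then the parameters are equal. -/
open Real

open Set

/-- A function strictly monotone on `Iic c` and strictly antitone on `Ici c`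
takes each value at most twice. -/
lemma unimodal_at_most_two {h : ℝ → ℝ} {c x y z : ℝ}
    (hm : StrictMonoOn h (Iic c)) (ha : StrictAntiOn h (Ici c))
    (hxy : x < y) (hyz : y < z) (e1 : h x = h y) (e2 : h y = h z) : False := by
  rcases le_or_gt y c with hyc | hyc
  · exact absurd e1 (ne_of_lt (hm (le_trans hxy.le hyc) hyc hxy))
  · exact absurd e2.symm (ne_of_lt (ha hyc.le (le_trans hyc.le hyz.le) hyz))

lemma gev_key (a₁ a₂ b : ℝ) (h2 : 0 < a₂) (h21 : a₂ < a₁) (hb : 0 < b)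
    (u v : ℝ) (hu : u ≠ 0) (hv : v ≠ 0)
    (hhu : Real.exp (-u * a₂) - b * Real.exp (-u * a₁) = 1 - b)
    (hhv : Real.exp (-v * a₂) - b * Real.exp (-v * a₁) = 1 - b) : u = v := by
  set H : ℝ → ℝ := fun x => Real.exp (-x * a₂) - b * Real.exp (-x * a₁) with hH
  set c : ℝ := Real.log (b * a₁ / a₂) / (a₁ - a₂) with hc
  have ha1 : (0:ℝ) < a₁ := lt_trans h2 h21
  have hderiv : ∀ x : ℝ, HasDerivAt H
      (Real.exp (-x * a₂) * (-a₂) - b * (Real.exp (-x * a₁) * (-a₁))) x := by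
    intro x
    have d2 : HasDerivAt (fun x : ℝ => -x * a₂) (-a₂) x := by
      simpa using ((hasDerivAt_id x).neg.mul_const a₂)
    have d1 : HasDerivAt (fun x : ℝ => -x * a₁) (-a₁) x := by
      simpa using ((hasDerivAt_id x).neg.mul_const a₁)
    exact (d2.exp).sub ((d1.exp).const_mul b)
  -- sign of the derivative
  have hsign : ∀ x : ℝ, x < c →
      0 < Real.exp (-x * a₂) * (-a₂) - b * (Real.exp (-x * a₁) * (-a₁)) := by
    intro x hx
    have h1 : x * (a₁ - a₂) < Real.log (b * a₁ / a₂) :=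
      (lt_div_iff₀ (by linarith)).mp hx
    have h2' : Real.exp (x * (a₁ - a₂)) < b * a₁ / a₂ := by
      calc Real.exp (x * (a₁ - a₂)) < Real.exp (Real.log (b * a₁ / a₂)) :=
            Real.exp_lt_exp.mpr h1
        _ = b * a₁ / a₂ := Real.exp_log (by positivity)
    have h3 : a₂ * Real.exp (x * (a₁ - a₂)) < b * a₁ :=
      (lt_div_iff₀' h2).mp h2'
    have h4 : a₂ * Real.exp (x * (a₁ - a₂)) * Real.exp (-x * a₁)
        < b * a₁ * Real.exp (-x * a₁) :=
      mul_lt_mul_of_pos_right h3 (Real.exp_pos _)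
    have h5 : Real.exp (x * (a₁ - a₂)) * Real.exp (-x * a₁) = Real.exp (-x * a₂) := by
      rw [← Real.exp_add]; ring_nf
    nlinarith [h4, h5]
  have hsign' : ∀ x : ℝ, c < x →
      Real.exp (-x * a₂) * (-a₂) - b * (Real.exp (-x * a₁) * (-a₁)) < 0 := by
    intro x hx
    have h1 : Real.log (b * a₁ / a₂) < x * (a₁ - a₂) :=
      (div_lt_iff₀ (by linarith)).mp hx
    have h2' : b * a₁ / a₂ < Real.exp (x * (a₁ - a₂)) := by
      calc b * a₁ / a₂ = Real.exp (Real.log (b * a₁ / a₂)) :=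
            (Real.exp_log (by positivity)).symm
        _ < Real.exp (x * (a₁ - a₂)) := Real.exp_lt_exp.mpr h1
    have h3 : b * a₁ < a₂ * Real.exp (x * (a₁ - a₂)) :=
      (div_lt_iff₀' h2).mp h2'
    have h4 : b * a₁ * Real.exp (-x * a₁)
        < a₂ * Real.exp (x * (a₁ - a₂)) * Real.exp (-x * a₁) :=
      mul_lt_mul_of_pos_right h3 (Real.exp_pos _)
    have h5 : Real.exp (x * (a₁ - a₂)) * Real.exp (-x * a₁) = Real.exp (-x * a₂) := by
      rw [← Real.exp_add]; ring_nf
    nlinarith [h4, h5]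
  have hcont : Continuous H := by
    rw [hH]; continuity
  have hmono : StrictMonoOn H (Iic c) := by
    apply strictMonoOn_of_deriv_pos (convex_Iic c) (hcont.continuousOn)
    intro x hx
    rw [interior_Iic] at hx
    rw [(hderiv x).deriv]
    exact hsign x hx
  have hanti : StrictAntiOn H (Ici c) := by
    apply strictAntiOn_of_deriv_neg (convex_Ici c) (hcont.continuousOn)
    intro x hx
    rw [interior_Ici] at hx
    rw [(hderiv x).deriv]
    exact hsign' x hx
  have hH0 : H 0 = 1 - b := by simp [hH]
  have hHu : H u = 1 - b := hhu
  have hHv : H v = 1 - b := hhv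
  by_contra huv
  rcases hu.lt_or_gt with hu0 | hu0 <;> rcases hv.lt_or_gt with hv0 | hv0 <;>
    rcases Ne.lt_or_gt huv with huv' | huv'
  · exact unimodal_at_most_two hmono hanti huv' hv0 (hHu.trans hHv.symm) (hHv.trans hH0.symm)
  · exact unimodal_at_most_two hmono hanti huv' hu0 (hHv.trans hHu.symm) (hHu.trans hH0.symm)
  · exact unimodal_at_most_two hmono hanti hu0 hv0 (hHu.trans hH0.symm) (hH0.trans hHv.symm)
  · linarith
  · linarith
  · exact unimodal_at_most_two hmono hanti hv0 hu0 (hHv.trans hH0.symm) (hH0.trans hHu.symm)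
  · exact unimodal_at_most_two hmono hanti hu0 huv' (hH0.trans hHu.symm) (hHu.trans hHv.symm)
  · exact unimodal_at_most_two hmono hanti hv0 huv' (hH0.trans hHv.symm) (hHv.trans hHu.symm)

/-- The q-quantile of the GEV distribution with parameters (ξ, μ, σ), ξ ≠ 0. -/
noncomputable def gevQuantile (ξ μ σ q : ℝ) : ℝ :=
  μ + (σ / ξ) * (Real.exp (-ξ * Real.log (-Real.log q)) - 1)

theorem gev_params_injective_from_three_quantiles
    (q₁ q₂ q₃ : ℝ) (h0 : 0 < q₁) (h12 : q₁ < q₂) (h23 : q₂ < q₃) (h31 : q₃ < 1)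
    (ξ μ σ ξ' μ' σ' : ℝ) (hξ : ξ ≠ 0) (hξ' : ξ' ≠ 0) (hσ : 0 < σ) (hσ' : 0 < σ')
    (h₁ : gevQuantile ξ μ σ q₁ = gevQuantile ξ' μ' σ' q₁)
    (h₂ : gevQuantile ξ μ σ q₂ = gevQuantile ξ' μ' σ' q₂)
    (h₃ : gevQuantile ξ μ σ q₃ = gevQuantile ξ' μ' σ' q₃) :
    ξ = ξ' ∧ μ = μ' ∧ σ = σ' := by
  simp only [gevQuantile] at h₁ h₂ h₃
  set L₁ := Real.log (-Real.log q₁) with hL₁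
  set L₂ := Real.log (-Real.log q₂) with hL₂
  set L₃ := Real.log (-Real.log q₃) with hL₃
  -- orderings of the L's
  have hq2 : 0 < q₂ := lt_trans h0 h12
  have hq3 : 0 < q₃ := lt_trans hq2 h23
  have hq21 : q₂ < 1 := lt_trans h23 h31
  have hq11 : q₁ < 1 := lt_trans h12 hq21
  have hl3 : 0 < -Real.log q₃ := by
    have := Real.log_neg hq3 h31; linarith
  have hl2 : 0 < -Real.log q₂ := by
    have := Real.log_neg hq2 hq21; linarith
  have hl32 : -Real.log q₃ < -Real.log q₂ := by
    have := Real.log_lt_log hq2 h23; linarith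
  have hl21 : -Real.log q₂ < -Real.log q₁ := by
    have := Real.log_lt_log h0 h12; linarith
  have hL32 : L₃ < L₂ := Real.log_lt_log hl3 hl32
  have hL21 : L₂ < L₁ := Real.log_lt_log hl2 hl21
  -- abbreviations
  set x₁ := Real.exp (-ξ * L₁) with hx₁
  set x₂ := Real.exp (-ξ * L₂) with hx₂
  set x₃ := Real.exp (-ξ * L₃) with hx₃
  set y₁ := Real.exp (-ξ' * L₁) with hy₁
  set y₂ := Real.exp (-ξ' * L₂) with hy₂
  set y₃ := Real.exp (-ξ' * L₃) with hy₃
  set c := σ / ξ with hcdef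
  set c' := σ' / ξ' with hc'def
  have hc : c ≠ 0 := div_ne_zero (ne_of_gt hσ) hξ
  have hc' : c' ≠ 0 := div_ne_zero (ne_of_gt hσ') hξ'
  have E1 : c * (x₁ - x₃) = c' * (y₁ - y₃) := by linarith
  have E2 : c * (x₂ - x₃) = c' * (y₂ - y₃) := by linarith
  -- sign facts
  have hsign : (x₂ < x₃ ∧ x₁ < x₃) ∨ (x₃ < x₂ ∧ x₃ < x₁) := by
    rcases hξ.lt_or_gt with hξ0 | hξ0
    · refine Or.inr ⟨Real.exp_lt_exp.mpr ?_, Real.exp_lt_exp.mpr ?_⟩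
      · linarith [mul_pos (neg_pos.mpr hξ0) (sub_pos.mpr hL32)]
      · linarith [mul_pos (neg_pos.mpr hξ0) (sub_pos.mpr (hL32.trans hL21))]
    · refine Or.inl ⟨Real.exp_lt_exp.mpr ?_, Real.exp_lt_exp.mpr ?_⟩
      · linarith [mul_pos hξ0 (sub_pos.mpr hL32)]
      · linarith [mul_pos hξ0 (sub_pos.mpr (hL32.trans hL21))]
  have hx31 : x₃ - x₁ ≠ 0 := by
    rcases hsign with ⟨h, h'⟩ | ⟨h, h'⟩ <;> intro hh <;> linarith
  have hx32 : x₃ - x₂ ≠ 0 := by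
    rcases hsign with ⟨h, h'⟩ | ⟨h, h'⟩ <;> intro hh <;> linarith
  set b := (x₃ - x₂) / (x₃ - x₁) with hbdef
  have hb : 0 < b := by
    rcases hsign with ⟨h, h'⟩ | ⟨h, h'⟩
    · exact div_pos (by linarith) (by linarith)
    · exact div_pos_of_neg_of_neg (by linarith) (by linarith)
  have hbx : b * (x₃ - x₁) = x₃ - x₂ := div_mul_cancel₀ _ hx31
  set a₁ := L₁ - L₃ with ha₁def
  set a₂ := L₂ - L₃ with ha₂def
  have ha₂ : 0 < a₂ := by simp [ha₂def]; linarith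
  have ha₁₂ : a₂ < a₁ := by simp [ha₂def, ha₁def]; linarith
  -- h(ξ) = 0
  have hx3pos : 0 < x₃ := Real.exp_pos _
  have hy3pos : 0 < y₃ := Real.exp_pos _
  have ex2 : Real.exp (-ξ * a₂) * x₃ = x₂ := by
    rw [hx₂, hx₃, ← Real.exp_add, ha₂def]; ring_nf
  have ex1 : Real.exp (-ξ * a₁) * x₃ = x₁ := by
    rw [hx₁, hx₃, ← Real.exp_add, ha₁def]; ring_nf
  have ey2 : Real.exp (-ξ' * a₂) * y₃ = y₂ := by
    rw [hy₂, hy₃, ← Real.exp_add, ha₂def]; ring_nf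
  have ey1 : Real.exp (-ξ' * a₁) * y₃ = y₁ := by
    rw [hy₁, hy₃, ← Real.exp_add, ha₁def]; ring_nf
  have rootξ : Real.exp (-ξ * a₂) - b * Real.exp (-ξ * a₁) = 1 - b := by
    have key : (Real.exp (-ξ * a₂) - b * Real.exp (-ξ * a₁) - (1 - b)) * x₃ = 0 := by
      linear_combination ex2 - b * ex1 + hbx
    have := mul_eq_zero.mp key
    rcases this with h | h
    · linarith
    · exact absurd h (ne_of_gt hx3pos)
  have rootξ' : Real.exp (-ξ' * a₂) - b * Real.exp (-ξ' * a₁) = 1 - b := by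
    have key : c' * ((Real.exp (-ξ' * a₂) - b * Real.exp (-ξ' * a₁) - (1 - b)) * y₃) = 0 := by
      linear_combination c' * ey2 - (c' * b) * ey1 - E2 + b * E1 + c * hbx
    rcases mul_eq_zero.mp key with h | h
    · exact absurd h hc'
    · rcases mul_eq_zero.mp h with h | h
      · linarith
      · exact absurd h (ne_of_gt hy3pos)
  have hξξ' : ξ = ξ' := gev_key a₁ a₂ b ha₂ ha₁₂ hb ξ ξ' hξ hξ' rootξ rootξ'
  have hyx2 : y₂ = x₂ := by rw [hy₂, hx₂, hξξ']
  have hyx3 : y₃ = x₃ := by rw [hy₃, hx₃, hξξ']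
  have hx23 : x₂ - x₃ ≠ 0 := fun hh => hx32 (by linarith)
  have hcc' : c = c' := by
    have h := E2
    rw [hyx2, hyx3] at h
    exact mul_right_cancel₀ hx23 (by linarith)
  have hσσ' : σ = σ' := by
    have h : σ / ξ * ξ = σ' / ξ' * ξ' := by rw [← hcdef, ← hc'def, hcc', hξξ']
    rwa [div_mul_cancel₀ _ hξ, div_mul_cancel₀ _ hξ'] at h
  have hμμ' : μ = μ' := by
    have h := h₃
    rw [hyx3, ← hcc'] at h
    linarith
  exact ⟨hξξ', hμμ', hσσ'⟩
end
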